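/- Fix an integer D ≥ 0 and a function l assigning a real number l(u) to every binary string u of length at most D. Define MDL(u) for binary strings u with |u| ≤ D by reverse induction on |u|: MDL(u) = l(u) if |u| = D, and MDL(u) = 1 + min( l(u), MDL(0u) + MDL(1u) ) if |u| < D, where 0u and 1u denote prepending a bit to u. For a binary string u with |u| ≤ D, call a finite set T of binary strings a complete proper tree rooted at u if every t ∈ T has u as a suffix and |t| ≤ D, no element of T is a proper suffix of another element of T, and Σ_{t∈T} 2^{−(|t|−|u|)} = 1. Define cost(T) = Σ_{t∈T} l(t) + |{v : v has u as a suffix, |v| < D, and v ∈ T or v is a proper suffix of some element of T}|. Then for every binary string u with |u| ≤ D, MDL(u) equals the minimum of cost(T) over all complete proper trees T rooted at u. -/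

import Mathlib

/-- The context-tree-pruning recursion of Phase I of PTP-MDL:
`MDL u = l u` when `|u| = D`, and
`MDL u = 1 + min (l u) (MDL (0u) + MDL (1u))` when `|u| < D`. -/
noncomputable def mdlCost (D : ℕ) (l : List Bool → ℝ) (u : List Bool) : ℝ :=
  if D ≤ u.length then l u
  else 1 + min (l u) (mdlCost D l (false :: u) + mdlCost D l (true :: u))
termination_by D - u.length
decreasing_by
  · simp only [List.length_cons]; omega
  · simp only [List.length_cons]; omega

/-- `T` is a complete proper tree rooted at `u` with depth at most `D`:
every element of `T` has `u` as a suffix and length at most `D`, no element of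
`T` is a proper suffix of another element of `T`, and the Kraft sum relative
to the root `u` equals 1. -/
def IsCompleteProperTree (D : ℕ) (u : List Bool) (T : Finset (List Bool)) : Prop :=
  (∀ t ∈ T, u <:+ t ∧ t.length ≤ D) ∧
    (∀ t₁ ∈ T, ∀ t₂ ∈ T, t₁ ≠ t₂ → ¬ t₁ <:+ t₂) ∧
    ∑ t ∈ T, (2 : ℝ) ^ (-((t.length : ℤ) - (u.length : ℤ))) = 1

/-- The total description length of the tree `T` rooted at `u`: the sum of the
leaf coding lengths plus one bit for every node of depth less than `D` of the
tree (elements of `T` or proper suffixes of elements of `T` having `u` as a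
suffix). -/
noncomputable def treeCost (D : ℕ) (l : List Bool → ℝ) (u : List Bool)
    (T : Finset (List Bool)) : ℝ :=
  (∑ t ∈ T, l t) +
    ({v : List Bool | u <:+ v ∧ v.length < D ∧
        (v ∈ T ∨ ∃ t ∈ T, v ≠ t ∧ v <:+ t)}.ncard : ℝ)

/-!
A complete proper tree rooted at `u` is either the single leaf `{u}` or, when `|u| < D`, the
disjoint union of complete proper trees rooted at the two children `0u` and `1u`: the Kraft
inequality for suffix-free sets forces both halves of the Kraft sum to be `1`. Under this
decomposition the cost is `l u + 1`, respectively `1` (for the root node) plus the costs of the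
two subtrees. Hence the set of tree costs at `u` is `1 + ({l u} ∪ (costs at 0u + costs at 1u))`,
whose least element is exactly the CTP recursion.
-/

theorem List.IsSuffix.eq_of_suffix_of_length_eq {α : Type*} {s₁ s₂ t : List α}
    (h₁ : s₁ <:+ t) (h₂ : s₂ <:+ t) (h : s₁.length = s₂.length) : s₁ = s₂ :=
  (List.suffix_of_suffix_length_le h₁ h₂ h.le).eq_of_length h

theorem List.eq_of_cons_suffix_of_cons_suffix {α : Type*} {a b : α} {u t : List α}
    (ha : a :: u <:+ t) (hb : b :: u <:+ t) : a = b :=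
  (List.cons.inj (ha.eq_of_suffix_of_length_eq hb rfl)).1

theorem List.exists_cons_suffix_of_suffix {α : Type*} {u t : List α} (h : u <:+ t)
    (hne : t ≠ u) : ∃ b, b :: u <:+ t := by
  induction t with
  | nil => exact absurd (List.suffix_nil.1 h).symm hne
  | cons a t ih =>
    rcases List.suffix_cons_iff.1 h with rfl | h
    · exact absurd rfl hne
    · by_cases htu : t = u
      · exact ⟨a, htu ▸ List.suffix_refl _⟩
      · obtain ⟨b, hb⟩ := ih h htu
        exact ⟨b, hb.trans (List.suffix_cons a t)⟩

namespace ContextTree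

noncomputable def kraftSum (u : List Bool) (T : Finset (List Bool)) : ℝ :=
  ∑ t ∈ T, (2 : ℝ) ^ (-((t.length : ℤ) - (u.length : ℤ)))

def subtree (b : Bool) (u : List Bool) (T : Finset (List Bool)) : Finset (List Bool) :=
  T.filter ((b :: u) <:+ ·)

/-- The set counted in `treeCost`, its two cases merged into `∃ t ∈ T, v <:+ t`. -/
def nodes (D : ℕ) (u : List Bool) (T : Finset (List Bool)) : Set (List Bool) :=
  {v | u <:+ v ∧ v.length < D ∧ ∃ t ∈ T, v <:+ t}

noncomputable def costs (D : ℕ) (l : List Bool → ℝ) (u : List Bool) : Set ℝ :=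
  {r | ∃ T : Finset (List Bool), IsCompleteProperTree D u T ∧ treeCost D l u T = r}

section

variable {u : List Bool} {T : Finset (List Bool)}

theorem cons_suffix_of_suffix_of_ne {t : List Bool} (h : u <:+ t) (hne : t ≠ u) :
    false :: u <:+ t ∨ true :: u <:+ t := by
  obtain ⟨b, hb⟩ := List.exists_cons_suffix_of_suffix h hne
  cases b
  · exact Or.inl hb
  · exact Or.inr hb

theorem mem_subtree {b : Bool} {t : List Bool} : t ∈ subtree b u T ↔ t ∈ T ∧ b :: u <:+ t :=
  Finset.mem_filter

theorem disjoint_subtree : Disjoint (subtree false u T) (subtree true u T) :=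
  Finset.disjoint_left.2 fun _ h₀ h₁ =>
    Bool.false_ne_true
      (List.eq_of_cons_suffix_of_cons_suffix (mem_subtree.1 h₀).2 (mem_subtree.1 h₁).2)

theorem subtree_union_subtree (hT : ∀ t ∈ T, u <:+ t) (hu : u ∉ T) :
    subtree false u T ∪ subtree true u T = T := by
  ext t
  simp only [Finset.mem_union, mem_subtree, ← and_or_left, and_iff_left_iff_imp]
  exact fun ht => cons_suffix_of_suffix_of_ne (hT t ht) (ne_of_mem_of_not_mem ht hu)

theorem subtree_union {b : Bool} {T₀ T₁ : Finset (List Bool)} (h₀ : ∀ t ∈ T₀, b :: u <:+ t)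
    (h₁ : ∀ t ∈ T₁, (!b) :: u <:+ t) : subtree b u (T₀ ∪ T₁) = T₀ := by
  ext t
  simp only [mem_subtree, Finset.mem_union, or_and_right]
  refine ⟨?_, fun ht => Or.inl ⟨ht, h₀ t ht⟩⟩
  rintro (⟨ht, -⟩ | ⟨ht, hb⟩)
  · exact ht
  · exact absurd (List.eq_of_cons_suffix_of_cons_suffix hb (h₁ t ht)) (by cases b <;> simp)

theorem notMem_of_forall_cons_suffix {b : Bool} (hT : ∀ t ∈ T, b :: u <:+ t) : u ∉ T :=
  fun hu => by simpa using (hT u hu).length_le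

theorem eq_singleton_of_mem (hT : ∀ t ∈ T, u <:+ t)
    (hfree : IsAntichain (· <:+ ·) (T : Set (List Bool))) (hu : u ∈ T) : T = {u} :=
  Finset.eq_singleton_iff_unique_mem.2
    ⟨hu, fun t ht => by_contra fun hne => hfree hu ht (Ne.symm hne) (hT t ht)⟩

@[simp]
theorem kraftSum_singleton : kraftSum u {u} = 1 := by
  simp [kraftSum]

@[simp]
theorem kraftSum_empty : kraftSum u ∅ = 0 := by
  simp [kraftSum]

theorem kraftSum_cons (b : Bool) : kraftSum (b :: u) T = 2 * kraftSum u T := by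
  rw [kraftSum, kraftSum, Finset.mul_sum]
  refine Finset.sum_congr rfl fun t _ => ?_
  rw [← zpow_one_add₀ two_ne_zero, List.length_cons]
  push_cast
  ring_nf

theorem kraftSum_eq_subtree (hT : ∀ t ∈ T, u <:+ t) (hu : u ∉ T) :
    kraftSum u T = (kraftSum (false :: u) (subtree false u T) +
      kraftSum (true :: u) (subtree true u T)) / 2 := by
  rw [kraftSum_cons, kraftSum_cons, ← mul_add, mul_div_cancel_left₀ _ two_ne_zero]
  conv_lhs => rw [← subtree_union_subtree hT hu]
  exact Finset.sum_union disjoint_subtree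

end

/-- The Kraft inequality for suffix-free sets of extensions of `u`. -/
theorem kraftSum_le_one {D : ℕ} {u : List Bool} {T : Finset (List Bool)}
    (hT : ∀ t ∈ T, u <:+ t ∧ t.length ≤ D)
    (hfree : IsAntichain (· <:+ ·) (T : Set (List Bool))) : kraftSum u T ≤ 1 := by
  by_cases hu : u ∈ T
  · rw [eq_singleton_of_mem (fun t ht => (hT t ht).1) hfree hu, kraftSum_singleton]
  by_cases hD : u.length < D
  · have hchild (b : Bool) : kraftSum (b :: u) (subtree b u T) ≤ 1 :=
      kraftSum_le_one (fun t ht => ⟨(mem_subtree.1 ht).2, (hT t (mem_subtree.1 ht).1).2⟩)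
        (hfree.subset (Finset.coe_subset.2 (Finset.filter_subset _ _)))
    rw [kraftSum_eq_subtree (fun t ht => (hT t ht).1) hu]
    linarith [hchild false, hchild true]
  · have hempty : T = ∅ := Finset.eq_empty_of_forall_notMem fun t ht => hu <| by
      obtain ⟨hut, htD⟩ := hT t ht
      have := hut.length_le
      rwa [hut.eq_of_length (by omega)]
    simp [hempty]
termination_by D - u.length

end ContextTree

open ContextTree

namespace IsCompleteProperTree

variable {D : ℕ} {u : List Bool} {T : Finset (List Bool)}

theorem kraftSum_eq (h : IsCompleteProperTree D u T) : kraftSum u T = 1 := h.2.2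

theorem isAntichain (h : IsCompleteProperTree D u T) :
    IsAntichain (· <:+ ·) (T : Set (List Bool)) :=
  h.2.1

theorem nonempty (h : IsCompleteProperTree D u T) : T.Nonempty := by
  rw [Finset.nonempty_iff_ne_empty]
  rintro rfl
  simpa using h.kraftSum_eq

theorem eq_singleton_of_mem (h : IsCompleteProperTree D u T) (hu : u ∈ T) : T = {u} :=
  ContextTree.eq_singleton_of_mem (fun t ht => (h.1 t ht).1) h.isAntichain hu

theorem eq_singleton_of_length_eq (h : IsCompleteProperTree D u T) (hD : u.length = D) :
    T = {u} := by
  obtain ⟨t, ht⟩ := h.nonempty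
  obtain ⟨hut, htD⟩ := h.1 t ht
  have := hut.length_le
  rw [← hut.eq_of_length (by omega)] at ht
  exact h.eq_singleton_of_mem ht

section Union

variable {T₀ T₁ : Finset (List Bool)} (h₀ : IsCompleteProperTree D (false :: u) T₀)
  (h₁ : IsCompleteProperTree D (true :: u) T₁)
include h₀ h₁

theorem subtree_false_union : subtree false u (T₀ ∪ T₁) = T₀ :=
  subtree_union (fun t ht => (h₀.1 t ht).1) (fun t ht => (h₁.1 t ht).1)

theorem subtree_true_union : subtree true u (T₀ ∪ T₁) = T₁ := by
  rw [Finset.union_comm]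
  exact subtree_union (fun t ht => (h₁.1 t ht).1) (fun t ht => (h₀.1 t ht).1)

theorem notMem_union : u ∉ T₀ ∪ T₁ := by
  rw [Finset.mem_union, not_or]
  exact ⟨notMem_of_forall_cons_suffix fun t ht => (h₀.1 t ht).1,
    notMem_of_forall_cons_suffix fun t ht => (h₁.1 t ht).1⟩

theorem union : IsCompleteProperTree D u (T₀ ∪ T₁) := by
  have hroot : ∀ t ∈ T₀ ∪ T₁, u <:+ t ∧ t.length ≤ D := by
    intro t ht
    rcases Finset.mem_union.1 ht with ht | ht
    · exact ⟨(List.suffix_cons _ u).trans (h₀.1 t ht).1, (h₀.1 t ht).2⟩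
    · exact ⟨(List.suffix_cons _ u).trans (h₁.1 t ht).1, (h₁.1 t ht).2⟩
  refine ⟨hroot, ?_, ?_⟩
  · intro t ht t' ht' hne hsuf
    rcases Finset.mem_union.1 ht with ht | ht <;> rcases Finset.mem_union.1 ht' with ht' | ht'
    · exact h₀.isAntichain ht ht' hne hsuf
    · exact Bool.false_ne_true (List.eq_of_cons_suffix_of_cons_suffix
        ((h₀.1 t ht).1.trans hsuf) (h₁.1 t' ht').1)
    · exact Bool.false_ne_true (List.eq_of_cons_suffix_of_cons_suffix
        (h₀.1 t' ht').1 ((h₁.1 t ht).1.trans hsuf))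
    · exact h₁.isAntichain ht ht' hne hsuf
  · rw [← kraftSum, kraftSum_eq_subtree (fun t ht => (hroot t ht).1) (h₀.notMem_union h₁),
      h₀.subtree_false_union h₁, h₀.subtree_true_union h₁, h₀.kraftSum_eq, h₁.kraftSum_eq]
    norm_num

end Union

end IsCompleteProperTree

theorem isCompleteProperTree_singleton {D : ℕ} {u : List Bool} (hu : u.length ≤ D) :
    IsCompleteProperTree D u {u} :=
  ⟨by simpa using hu, by simp, kraftSum_singleton⟩

theorem isCompleteProperTree_subtree {D : ℕ} {u : List Bool} {T : Finset (List Bool)}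
    (h : IsCompleteProperTree D u T) (hu : u ∉ T) (b : Bool) :
    IsCompleteProperTree D (b :: u) (subtree b u T) := by
  have hroot (c : Bool) (t : List Bool) (ht : t ∈ subtree c u T) :
      c :: u <:+ t ∧ t.length ≤ D :=
    ⟨(mem_subtree.1 ht).2, (h.1 t (mem_subtree.1 ht).1).2⟩
  have hfree (c : Bool) : IsAntichain (· <:+ ·) (subtree c u T : Set (List Bool)) :=
    h.isAntichain.subset (Finset.coe_subset.2 (Finset.filter_subset _ _))
  have hkraft := h.kraftSum_eq
  rw [kraftSum_eq_subtree (fun t ht => (h.1 t ht).1) hu] at hkraft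
  -- both halves of the Kraft sum are at most `1` and they average to `1`
  have h₀ := kraftSum_le_one (hroot false) (hfree false)
  have h₁ := kraftSum_le_one (hroot true) (hfree true)
  refine ⟨hroot b, hfree b, show kraftSum _ _ = 1 from ?_⟩
  cases b <;> linarith

namespace ContextTree

section

variable {D : ℕ} {u : List Bool} {T : Finset (List Bool)}

theorem treeCost_eq (l : List Bool → ℝ) :
    treeCost D l u T = ∑ t ∈ T, l t + (nodes D u T).ncard := by
  have hnodes : {v | u <:+ v ∧ v.length < D ∧ (v ∈ T ∨ ∃ t ∈ T, v ≠ t ∧ v <:+ t)} =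
      nodes D u T := by
    ext v
    refine and_congr_right fun _ => and_congr_right fun _ => ⟨?_, ?_⟩
    · rintro (hv | ⟨t, ht, -, hvt⟩)
      · exact ⟨v, hv, List.suffix_refl v⟩
      · exact ⟨t, ht, hvt⟩
    · rintro ⟨t, ht, hvt⟩
      by_cases hvt' : v = t
      · exact Or.inl (hvt' ▸ ht)
      · exact Or.inr ⟨t, ht, hvt', hvt⟩
  rw [treeCost, hnodes]

theorem nodes_finite : (nodes D u T).Finite :=
  (T.biUnion fun t => t.tails.toFinset).finite_toSet.subset fun _ ⟨_, _, t, ht, hvt⟩ => by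
    simpa using ⟨t, ht, hvt⟩

theorem nodes_eq_empty (hD : D ≤ u.length) : nodes D u T = ∅ :=
  Set.eq_empty_of_forall_notMem fun _ ⟨huv, hv, _⟩ => by have := huv.length_le; omega

theorem nodes_singleton (hD : u.length < D) : nodes D u {u} = {u} := by
  ext v
  simp only [nodes, Finset.mem_singleton, exists_eq_left, Set.mem_ofPred_eq,
    Set.mem_singleton_iff]
  refine ⟨fun ⟨huv, _, hvu⟩ => (huv.eq_of_length ?_).symm, ?_⟩
  · exact le_antisymm huv.length_le hvu.length_le
  · rintro rfl
    exact ⟨List.suffix_refl v, hD, List.suffix_refl v⟩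

theorem notMem_nodes_cons {b : Bool} : u ∉ nodes D (b :: u) T :=
  fun ⟨h, _⟩ => by simpa using h.length_le

theorem disjoint_nodes (T₀ T₁ : Finset (List Bool)) :
    Disjoint (nodes D (false :: u) T₀) (nodes D (true :: u) T₁) :=
  Set.disjoint_left.2 fun _ ⟨h₀, _⟩ ⟨h₁, _⟩ =>
    Bool.false_ne_true (List.eq_of_cons_suffix_of_cons_suffix h₀ h₁)

theorem nodes_eq_insert (hD : u.length < D) (hu : ∃ t ∈ T, u <:+ t) :
    nodes D u T =
      insert u (nodes D (false :: u) (subtree false u T) ∪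
        nodes D (true :: u) (subtree true u T)) := by
  ext v
  have hchild (b : Bool) (hb : b :: u <:+ v) :
      v ∈ nodes D (b :: u) (subtree b u T) ↔ v ∈ nodes D u T := by
    refine and_congr ⟨fun _ => (List.suffix_cons b u).trans hb, fun _ => hb⟩
      (and_congr_right fun _ => ⟨fun ⟨t, ht, hvt⟩ => ⟨t, (mem_subtree.1 ht).1, hvt⟩,
        fun ⟨t, ht, hvt⟩ => ⟨t, mem_subtree.2 ⟨ht, hb.trans hvt⟩, hvt⟩⟩)
  rw [Set.mem_insert_iff, Set.mem_union]
  constructor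
  · intro hv
    rcases eq_or_ne v u with rfl | hvu
    · exact Or.inl rfl
    · rcases cons_suffix_of_suffix_of_ne hv.1 hvu with hb | hb
      · exact Or.inr (Or.inl ((hchild false hb).2 hv))
      · exact Or.inr (Or.inr ((hchild true hb).2 hv))
  · rintro (rfl | hv | hv)
    · exact ⟨List.suffix_refl v, hD, hu⟩
    · exact (hchild false hv.1).1 hv
    · exact (hchild true hv.1).1 hv

theorem ncard_nodes_eq (hD : u.length < D) (hu : ∃ t ∈ T, u <:+ t) :
    (nodes D u T).ncard =
      1 + (nodes D (false :: u) (subtree false u T)).ncard +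
        (nodes D (true :: u) (subtree true u T)).ncard := by
  rw [nodes_eq_insert hD hu, Set.ncard_insert_of_notMem
      (by rintro (h | h) <;> exact notMem_nodes_cons h) (nodes_finite.union nodes_finite),
    Set.ncard_union_eq (disjoint_nodes _ _) nodes_finite nodes_finite]
  omega

variable (l : List Bool → ℝ)

theorem treeCost_singleton_of_lt (hD : u.length < D) : treeCost D l u {u} = l u + 1 := by
  simp [treeCost_eq, nodes_singleton hD]

theorem treeCost_singleton_of_le (hD : D ≤ u.length) : treeCost D l u {u} = l u := by
  simp [treeCost_eq, nodes_eq_empty hD]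

theorem treeCost_eq_subtree (hD : u.length < D) (hT : ∀ t ∈ T, u <:+ t) (hu : u ∉ T)
    (hne : T.Nonempty) :
    treeCost D l u T =
      1 + treeCost D l (false :: u) (subtree false u T) +
        treeCost D l (true :: u) (subtree true u T) := by
  obtain ⟨t, ht⟩ := hne
  conv_lhs => rw [treeCost_eq, ← subtree_union_subtree hT hu, Finset.sum_union disjoint_subtree,
    subtree_union_subtree hT hu, ncard_nodes_eq hD ⟨t, ht, hT t ht⟩]
  rw [treeCost_eq, treeCost_eq]
  push_cast
  ring

theorem costs_of_length_eq (hD : u.length = D) : costs D l u = {l u} := by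
  ext r
  constructor
  · rintro ⟨T, hT, rfl⟩
    rw [hT.eq_singleton_of_length_eq hD, treeCost_singleton_of_le l hD.ge]
    rfl
  · rintro rfl
    exact ⟨{u}, isCompleteProperTree_singleton hD.le, treeCost_singleton_of_le l hD.ge⟩

theorem costs_of_lt (hD : u.length < D) :
    costs D l u = (1 + ·) '' ({l u} ∪
      Set.image2 (· + ·) (costs D l (false :: u)) (costs D l (true :: u))) := by
  ext r
  simp only [Set.mem_image, Set.mem_union, Set.mem_singleton_iff, Set.mem_image2]
  constructor
  · rintro ⟨T, hT, rfl⟩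
    by_cases hu : u ∈ T
    · rw [hT.eq_singleton_of_mem hu, treeCost_singleton_of_lt l hD]
      exact ⟨l u, Or.inl rfl, add_comm _ _⟩
    · refine ⟨_, Or.inr ⟨_, ⟨_, isCompleteProperTree_subtree hT hu false, rfl⟩,
        _, ⟨_, isCompleteProperTree_subtree hT hu true, rfl⟩, rfl⟩, ?_⟩
      rw [treeCost_eq_subtree l hD (fun t ht => (hT.1 t ht).1) hu hT.nonempty, add_assoc]
  · rintro ⟨x, rfl | ⟨_, ⟨T₀, h₀, rfl⟩, _, ⟨T₁, h₁, rfl⟩, rfl⟩, rfl⟩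
    · exact ⟨{u}, isCompleteProperTree_singleton hD.le,
        by rw [treeCost_singleton_of_lt l hD, add_comm]⟩
    · refine ⟨T₀ ∪ T₁, h₀.union h₁, ?_⟩
      rw [treeCost_eq_subtree l hD (fun t ht => ((h₀.union h₁).1 t ht).1) (h₀.notMem_union h₁)
        (h₀.union h₁).nonempty, h₀.subtree_false_union h₁, h₀.subtree_true_union h₁, add_assoc]

end

end ContextTree

/-- Context tree pruning computes the MDL tree source structure: for every
string `u` of length at most `D`, the recursion `mdlCost` equals the minimum of
`treeCost` over all complete proper trees rooted at `u`. -/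
theorem mdlCost_isLeast_treeCost (D : ℕ) (l : List Bool → ℝ)
    (u : List Bool) (hu : u.length ≤ D) :
    IsLeast {r : ℝ | ∃ T : Finset (List Bool),
        IsCompleteProperTree D u T ∧ treeCost D l u T = r}
      (mdlCost D l u) := by
  change IsLeast (costs D l u) _
  rw [mdlCost]
  split_ifs with hD
  · rw [costs_of_length_eq l (le_antisymm hu hD)]
    exact isLeast_singleton
  · have hchild (b : Bool) : IsLeast (costs D l (b :: u)) (mdlCost D l (b :: u)) :=
      mdlCost_isLeast_treeCost D l (b :: u) (by rw [List.length_cons]; omega)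
    rw [costs_of_lt l (not_le.1 hD)]
    exact (monotone_id.const_add 1).map_isLeast (isLeast_singleton.union
      ((hchild false).image2 (fun _ => monotone_id.add_const _)
        (fun _ => monotone_id.const_add _) (hchild true)))
termination_by D - u.length
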